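/- Let A ∈ ℤ^{d×n} with ℤA = ℤ^d. The system yA ≤ c is totally dual integral (every linear program min{c·x : Ax = b, x ≥ 0} with b ∈ cone(A) ∩ ℤ^d has an integral optimal solution) if and only if the regular triangulation Δ_c is unimodular, i.e., ℤA_σ = ℤ^d for every maximal face σ of Δ_c. -/

import Mathlib

open Matrix

/-- The `j`-th column of `A`, viewed as a real vector. -/
def colA {d n : ℕ} (A : Matrix (Fin d) (Fin n) ℤ) (j : Fin n) : Fin d → ℝ :=
  fun i => (A i j : ℝ)

/-- `σ` indexes a face of the regular triangulation `Δ_c`. -/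
def IsDeltaFace {d n : ℕ} (A : Matrix (Fin d) (Fin n) ℤ) (c : Fin n → ℤ)
    (σ : Finset (Fin n)) : Prop :=
  ∃ y : Fin d → ℝ, (∀ j ∈ σ, y ⬝ᵥ colA A j = (c j : ℝ)) ∧
    ∀ j ∉ σ, y ⬝ᵥ colA A j < (c j : ℝ)

lemma cast_mulVec {d n : ℕ} (A : Matrix (Fin d) (Fin n) ℤ) (v : Fin n → ℤ) :
    (A.map (Int.cast : ℤ → ℝ)).mulVec (fun j => (v j : ℝ)) = fun i => ((A.mulVec v) i : ℝ) := by
  funext i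
  simp [Matrix.mulVec, dotProduct, Matrix.map]

lemma sum_smul_col {d n : ℕ} (A : Matrix (Fin d) (Fin n) ℤ) (lam : Fin n → ℝ) :
    ∑ j, lam j • colA A j = (A.map (Int.cast : ℤ → ℝ)).mulVec lam := by
  funext i
  simp [colA, Matrix.mulVec, dotProduct, Matrix.map, Finset.sum_apply, mul_comm]

lemma intKer {d n : ℕ} (A : Matrix (Fin d) (Fin n) ℤ) (c : Fin n → ℤ)
    (hgen : ∀ x y : Fin n → ℕ,
      A.mulVec (fun i => (x i : ℤ)) = A.mulVec (fun i => (y i : ℤ)) →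
      (∑ i, c i * (x i : ℤ)) = (∑ i, c i * (y i : ℤ)) → x = y)
    (z : Fin n → ℤ) (h1 : A.mulVec z = 0) (h2 : ∑ j, c j * z j = 0) : z = 0 := by
  set x : Fin n → ℕ := fun j => (z j).toNat with hx
  set y : Fin n → ℕ := fun j => (-z j).toNat with hy
  have hzd : ∀ j, (x j : ℤ) - (y j : ℤ) = z j := by
    intro j; simp only [hx, hy]; omega
  have hxy : (fun i => (x i : ℤ)) - (fun i => (y i : ℤ)) = z := funext hzd
  have hA : A.mulVec (fun i => (x i : ℤ)) = A.mulVec (fun i => (y i : ℤ)) := by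
    have := Matrix.mulVec_sub A (fun i => (x i : ℤ)) (fun i => (y i : ℤ))
    rw [hxy, h1] at this
    exact sub_eq_zero.mp this.symm
  have hc : (∑ i, c i * (x i : ℤ)) = ∑ i, c i * (y i : ℤ) := by
    have : (∑ i, c i * (x i : ℤ)) - (∑ i, c i * (y i : ℤ)) = ∑ j, c j * z j := by
      rw [← Finset.sum_sub_distrib]
      congr 1; funext j; rw [← mul_sub, hzd j]
    rw [h2] at this
    exact sub_eq_zero.mp this
  have := hgen x y hA hc
  funext j
  have h2 := congrFun this j
  simp only [hx, hy] at h2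
  simp only [Pi.zero_apply]
  omega

lemma n_le_d1 {d n : ℕ} (A : Matrix (Fin d) (Fin n) ℤ) (c : Fin n → ℤ)
    (hik : ∀ z : Fin n → ℤ, A.mulVec z = 0 → ∑ j, c j * z j = 0 → z = 0) :
    n ≤ d + 1 := by
  have hli : LinearIndependent ℤ
      (fun j : Fin n => (Fin.cons (c j) (fun i => A i j) : Fin (d+1) → ℤ)) := by
    rw [Fintype.linearIndependent_iff]
    intro g hg
    have h0 : ∑ j, g j * c j = 0 := by
      have := congrFun hg 0
      simpa [Finset.sum_apply] using this
    have hA : A.mulVec g = 0 := by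
      funext i
      have := congrFun hg i.succ
      simp only [Finset.sum_apply, Pi.smul_apply, smul_eq_mul, Fin.cons_succ, Pi.zero_apply] at this
      simp only [Matrix.mulVec, dotProduct, Pi.zero_apply]
      rw [← this]
      exact Finset.sum_congr rfl (fun j _ => mul_comm _ _)
    have hz := hik g hA (by rw [← h0]; exact Finset.sum_congr rfl (fun j _ => mul_comm _ _))
    intro j; rw [hz]; rfl
  have := hli.fintype_card_le_finrank
  simpa [Module.finrank_fin_fun] using this

lemma exists_circuit {d n : ℕ} (A : Matrix (Fin d) (Fin n) ℤ) (hn : d < n) :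
    ∃ z : Fin n → ℤ, z ≠ 0 ∧ A.mulVec z = 0 := by
  have : ¬ LinearIndependent ℤ (fun j : Fin n => (fun i => A i j : Fin d → ℤ)) := by
    intro h
    have := h.fintype_card_le_finrank
    simp [Module.finrank_fin_fun] at this
    omega
  rw [Fintype.not_linearIndependent_iff] at this
  obtain ⟨g, hg, j0, hj0⟩ := this
  refine ⟨g, fun h => hj0 (by rw [h]; rfl), ?_⟩
  funext i
  have := congrFun hg i
  simp only [Finset.sum_apply, Pi.smul_apply, smul_eq_mul, Pi.zero_apply] at this
  simp only [Matrix.mulVec, dotProduct, Pi.zero_apply]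
  rw [← this]
  exact Finset.sum_congr rfl (fun j _ => mul_comm _ _)

lemma surj_of_hZA {d n : ℕ} (A : Matrix (Fin d) (Fin n) ℤ)
    (hZA : ∀ w : Fin d → ℤ, ∃ v : Fin n → ℤ, A.mulVec v = w) :
    LinearMap.range (A.map (Int.cast : ℤ → ℝ)).mulVecLin = ⊤ := by
  rw [← top_le_iff, ← (Pi.basisFun ℝ (Fin d)).span_eq]
  rw [Submodule.span_le]
  rintro x ⟨i, rfl⟩
  obtain ⟨v, hv⟩ := hZA (fun k => if k = i then 1 else 0)
  refine ⟨fun j => (v j : ℝ), ?_⟩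
  rw [Matrix.mulVecLin_apply, cast_mulVec A v, hv]
  funext k
  simp [Pi.basisFun_apply, Pi.single_apply]

lemma ker_span {d : ℕ} (M : Matrix (Fin d) (Fin (d+1)) ℝ)
    (hsurj : LinearMap.range M.mulVecLin = ⊤)
    (zR : Fin (d+1) → ℝ) (hz0 : zR ≠ 0) (hzk : M.mulVec zR = 0) :
    ∀ v : Fin (d+1) → ℝ, M.mulVec v = 0 → ∃ t : ℝ, v = t • zR := by
  have hker : LinearMap.ker M.mulVecLin = Submodule.span ℝ {zR} := by
    have hle : Submodule.span ℝ {zR} ≤ LinearMap.ker M.mulVecLin := by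
      rw [Submodule.span_singleton_le_iff_mem, LinearMap.mem_ker, Matrix.mulVecLin_apply]
      exact hzk
    have hfr : Module.finrank ℝ (LinearMap.ker M.mulVecLin) = 1 := by
      have h1 := LinearMap.finrank_range_add_finrank_ker M.mulVecLin
      rw [hsurj] at h1
      simp [Module.finrank_fin_fun, finrank_top] at h1
      omega
    have hfs : Module.finrank ℝ (Submodule.span ℝ {zR}) = 1 := finrank_span_singleton hz0
    exact (Submodule.eq_of_le_of_finrank_eq hle (by rw [hfs, hfr])).symm
  intro v hv
  have : v ∈ Submodule.span ℝ {zR} := by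
    rw [← hker, LinearMap.mem_ker, Matrix.mulVecLin_apply]; exact hv
  rw [Submodule.mem_span_singleton] at this
  obtain ⟨t, ht⟩ := this
  exact ⟨t, ht.symm⟩

lemma dual_pair {d n : ℕ} (A : Matrix (Fin d) (Fin n) ℤ) (y : Fin d → ℝ) (zR : Fin n → ℝ)
    (hz : (A.map (Int.cast : ℤ → ℝ)).mulVec zR = 0) :
    ∑ j, zR j * (y ⬝ᵥ colA A j) = 0 := by
  have h1 : ∀ i, ∑ j, (A i j : ℝ) * zR j = 0 := by
    intro i
    have := congrFun hz i
    simpa [Matrix.mulVec, dotProduct, Matrix.map] using this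
  have h2 : ∑ j, zR j * (y ⬝ᵥ colA A j) = ∑ i, y i * ∑ j, (A i j : ℝ) * zR j := by
    simp only [dotProduct, colA, Finset.mul_sum]
    rw [Finset.sum_comm]
    exact Finset.sum_congr rfl fun i _ => Finset.sum_congr rfl fun j _ => by ring
  rw [h2]
  simp [h1]

lemma cost_shift {m : ℕ} (c : Fin m → ℤ) (v zR : Fin m → ℝ) (t : ℝ) :
    ∑ j, (c j : ℝ) * (v j + t * zR j)
      = (∑ j, (c j : ℝ) * v j) + t * ∑ j, (c j : ℝ) * zR j := by
  rw [Finset.mul_sum, ← Finset.sum_add_distrib]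
  exact Finset.sum_congr rfl fun j _ => by ring

lemma exists_dual {d : ℕ} (M : Matrix (Fin d) (Fin (d+1)) ℝ)
    (hsurj : LinearMap.range M.mulVecLin = ⊤)
    (zR : Fin (d+1) → ℝ) (hzk : M.mulVec zR = 0)
    (j0 : Fin (d+1)) (hj0 : zR j0 ≠ 0) (t : Fin (d+1) → ℝ) :
    ∃ y : Fin d → ℝ, ∀ k, k ≠ j0 → y ⬝ᵥ (fun i => M i k) = t k := by
  classical
  let L : (Fin d → ℝ) →ₗ[ℝ] ({k : Fin (d+1) // k ≠ j0} → ℝ) :=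
    { toFun := fun y => fun k => y ⬝ᵥ (fun i => M i (k : Fin (d+1)))
      map_add' := by intro y1 y2; funext k; simp [add_dotProduct]
      map_smul' := by intro s y; funext k; simp [smul_dotProduct] }
  have hinj : Function.Injective L := by
    rw [← LinearMap.ker_eq_bot, Submodule.eq_bot_iff]
    intro y hy
    rw [LinearMap.mem_ker] at hy
    have hall : ∀ k, y ⬝ᵥ (fun i => M i k) = 0 := by
      intro k
      by_cases hk : k = j0
      · rw [hk]
        have h1 : y ⬝ᵥ M.mulVec zR = vecMul y M ⬝ᵥ zR := Matrix.dotProduct_mulVec y M zR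
        rw [hzk] at h1
        simp only [dotProduct_zero] at h1
        have h2 : ∀ k', k' ≠ j0 → vecMul y M k' = 0 := by
          intro k' hk'
          have := congrFun hy ⟨k', hk'⟩
          simpa [L, Matrix.vecMul, dotProduct] using this
        have h3 : vecMul y M ⬝ᵥ zR = vecMul y M j0 * zR j0 := by
          rw [dotProduct]
          rw [Finset.sum_eq_single j0]
          · intro k' _ hk'; rw [h2 k' hk']; ring
          · intro h; exact absurd (Finset.mem_univ j0) h
        rw [h3] at h1
        have h4 : vecMul y M j0 = 0 := by
          rcases mul_eq_zero.mp h1.symm with h | h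
          · exact h
          · exact absurd h hj0
        simpa [Matrix.vecMul, dotProduct] using h4
      · have := congrFun hy ⟨k, hk⟩
        simpa [L] using this
    have hvm : vecMul y M = 0 := by
      funext k
      simpa [Matrix.vecMul, dotProduct] using hall k
    -- y ⬝ᵥ w = 0 for all w in range = ⊤
    have hyw : ∀ w : Fin d → ℝ, y ⬝ᵥ w = 0 := by
      intro w
      have hw : w ∈ LinearMap.range M.mulVecLin := by rw [hsurj]; trivial
      obtain ⟨u, hu⟩ := hw
      rw [← hu, Matrix.mulVecLin_apply, Matrix.dotProduct_mulVec, hvm, zero_dotProduct]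
    have := hyw y
    rw [dotProduct_self_eq_zero] at this
    exact this
  have hsurjL : Function.Surjective L := by
    have hfr : Module.finrank ℝ (Fin d → ℝ) = Module.finrank ℝ ({k : Fin (d+1) // k ≠ j0} → ℝ) := by
      rw [Module.finrank_fin_fun, Module.finrank_fintype_fun_eq_card]
      rw [Fintype.card_subtype_compl]
      simp
    exact (LinearMap.injective_iff_surjective_of_finrank_eq_finrank hfr).mp hinj
  obtain ⟨y, hy⟩ := hsurjL (fun k => t (k : Fin (d+1)))
  refine ⟨y, fun k hk => ?_⟩
  have := congrFun hy ⟨k, hk⟩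
  simpa [L] using this

lemma square_lhs (d : ℕ) (A : Matrix (Fin d) (Fin d) ℤ) (c : Fin d → ℤ)
    (hsurj : LinearMap.range (A.map (Int.cast : ℤ → ℝ)).mulVecLin = ⊤)
    (hZA : ∀ w : Fin d → ℤ, ∃ v : Fin d → ℤ, A.mulVec v = w) :
    ∀ b : Fin d → ℤ,
      (∃ lam : Fin d → ℝ, (∀ j, 0 ≤ lam j) ∧
        (fun i => (b i : ℝ)) = ∑ j, lam j • colA A j) →
      ∃ x : Fin d → ℕ, A.mulVec (fun i => (x i : ℤ)) = b ∧
        ∀ y : Fin d → ℝ, (∀ j, 0 ≤ y j) →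
          (∀ i, ∑ j, (A i j : ℝ) * y j = (b i : ℝ)) →
          (∑ j, (c j : ℝ) * (x j : ℝ)) ≤ ∑ j, (c j : ℝ) * y j := by
  intro b ⟨lam, hlam0, hlamb⟩
  set M := A.map (Int.cast : ℤ → ℝ) with hM
  have hinj : Function.Injective M.mulVecLin :=
    LinearMap.injective_iff_surjective.mpr (LinearMap.range_eq_top.mp hsurj)
  have hmvinj : ∀ u v : Fin d → ℝ, M.mulVec u = M.mulVec v → u = v := by
    intro u v h
    exact hinj (by rw [Matrix.mulVecLin_apply, Matrix.mulVecLin_apply]; exact h)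
  obtain ⟨v, hv⟩ := hZA b
  have hveq : (fun j => (v j : ℝ)) = lam := by
    apply hmvinj
    rw [cast_mulVec A v, hv, ← sum_smul_col, ← hlamb]
  have hvnn : ∀ j, 0 ≤ v j := by
    intro j
    have : (0:ℝ) ≤ (v j : ℝ) := by rw [congrFun hveq j]; exact hlam0 j
    exact_mod_cast this
  refine ⟨fun j => (v j).toNat, ?_, ?_⟩
  · have : (fun i => ((v i).toNat : ℤ)) = v := by
      funext i; exact Int.toNat_of_nonneg (hvnn i)
    rw [this, hv]
  · intro y hy0 hyf
    have hyeq : y = lam := by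
      apply hmvinj
      have h2 : M.mulVec lam = fun i => (b i : ℝ) := by
        rw [← sum_smul_col, ← hlamb]
      rw [h2]
      funext i
      simpa [Matrix.mulVec, dotProduct, hM, Matrix.map] using hyf i
    rw [hyeq]
    apply le_of_eq
    apply Finset.sum_congr rfl
    intro j _
    congr 1
    rw [← congrFun hveq j]
    simp only []
    rw [← Int.cast_natCast (R := ℝ), Int.toNat_of_nonneg (hvnn j)]


lemma square_rhs (d : ℕ) (A : Matrix (Fin d) (Fin d) ℤ) (c : Fin d → ℤ)
    (hZA : ∀ w : Fin d → ℤ, ∃ v : Fin d → ℤ, A.mulVec v = w) :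
    ∀ σ : Finset (Fin d), (σ.card = d) →
      ∀ w : Fin d → ℤ, ∃ z : Fin d → ℤ, (∀ j ∉ σ, z j = 0) ∧ A.mulVec z = w := by
  intro σ hcard w
  have hσ : σ = Finset.univ := Finset.eq_univ_of_card σ (by simp [hcard])
  obtain ⟨v, hv⟩ := hZA w
  exact ⟨v, fun j hj => absurd (hσ ▸ Finset.mem_univ j) hj, hv⟩

lemma dir_mp (d : ℕ) (A : Matrix (Fin d) (Fin (d+1)) ℤ) (c : Fin (d+1) → ℤ)
    (z : Fin (d+1) → ℤ) (hz : A.mulVec z = 0) (hS : 0 < ∑ j, c j * z j)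
    (hkspan : ∀ v : Fin (d+1) → ℝ,
      (A.map (Int.cast : ℤ → ℝ)).mulVec v = 0 → ∃ t : ℝ, v = t • (fun j => ((z j : ℤ) : ℝ)))
    (hZA : ∀ w : Fin d → ℤ, ∃ v : Fin (d+1) → ℤ, A.mulVec v = w)
    (hL : ∀ b : Fin d → ℤ,
      (∃ lam : Fin (d+1) → ℝ, (∀ j, 0 ≤ lam j) ∧
        (fun i => (b i : ℝ)) = ∑ j, lam j • colA A j) →
      ∃ x : Fin (d+1) → ℕ, A.mulVec (fun i => (x i : ℤ)) = b ∧
        ∀ y : Fin (d+1) → ℝ, (∀ j, 0 ≤ y j) →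
          (∀ i, ∑ j, (A i j : ℝ) * y j = (b i : ℝ)) →
          (∑ j, (c j : ℝ) * (x j : ℝ)) ≤ ∑ j, (c j : ℝ) * y j) :
    ∀ σ : Finset (Fin (d+1)), IsDeltaFace A c σ → σ.card = d →
      ∀ w : Fin d → ℤ, ∃ zz : Fin (d+1) → ℤ, (∀ j ∉ σ, zz j = 0) ∧ A.mulVec zz = w := by
  classical
  set zR : Fin (d+1) → ℝ := fun j => ((z j : ℤ) : ℝ) with hzR
  set M := A.map (Int.cast : ℤ → ℝ) with hMdef
  have hMz : M.mulVec zR = 0 := by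
    rw [hMdef, hzR, cast_mulVec A z, hz]
    funext i; simp
  have hSR : (0:ℝ) < ∑ j, (c j : ℝ) * zR j := by
    have : ((∑ j, c j * z j : ℤ) : ℝ) = ∑ j, (c j : ℝ) * zR j := by push_cast [hzR]; rfl
    rw [← this]
    exact_mod_cast hS
  intro σ hface hcard w
  obtain ⟨y, hyeq, hylt⟩ := hface
  have hccard : σᶜ.card = 1 := by
    rw [Finset.card_compl, hcard]; simp
  obtain ⟨j0, hj0⟩ := Finset.card_eq_one.mp hccard
  have hj0σ : j0 ∉ σ := by
    have : j0 ∈ σᶜ := hj0 ▸ Finset.mem_singleton_self j0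
    simpa using this
  have hmem : ∀ k, k ≠ j0 → k ∈ σ := by
    intro k hk
    by_contra h
    have : k ∈ σᶜ := Finset.mem_compl.mpr h
    rw [hj0] at this
    exact hk (Finset.mem_singleton.mp this)
  have hkey : zR j0 * ((c j0 : ℝ) - y ⬝ᵥ colA A j0) = ∑ j, (c j : ℝ) * zR j := by
    have hdp := dual_pair A y zR hMz
    have h3 : ∑ j, zR j * ((c j : ℝ) - y ⬝ᵥ colA A j) = ∑ j, (c j : ℝ) * zR j := by
      simp only [mul_sub]
      rw [Finset.sum_sub_distrib, hdp, sub_zero]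
      exact Finset.sum_congr rfl fun j _ => mul_comm _ _
    rw [← h3]
    rw [Finset.sum_eq_single j0]
    · intro k _ hk
      rw [hyeq k (hmem k hk)]
      ring
    · intro h; exact absurd (Finset.mem_univ j0) h
  have hzRj0 : 0 < zR j0 := by
    have h1 : 0 < zR j0 * ((c j0 : ℝ) - y ⬝ᵥ colA A j0) := by rw [hkey]; exact hSR
    have h2 : 0 < (c j0 : ℝ) - y ⬝ᵥ colA A j0 := sub_pos.mpr (hylt j0 hj0σ)
    nlinarith
  have hzRj0ne : zR j0 ≠ 0 := ne_of_gt hzRj0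
  obtain ⟨v, hv⟩ := hZA w
  set q : ℝ := (v j0 : ℝ) / zR j0 with hq
  set oneσ : Fin (d+1) → ℤ := fun k => if k ∈ σ then 1 else 0 with honeσ
  obtain ⟨M0, hM0⟩ := exists_nat_ge
    (Finset.univ.sup' Finset.univ_nonempty (fun k : Fin (d+1) => q * zR k - (v k : ℝ)))
  have hM0k : ∀ k, q * zR k - (v k : ℝ) ≤ M0 :=
    fun k => le_trans (Finset.le_sup' (fun k : Fin (d+1) => q * zR k - (v k : ℝ)) (Finset.mem_univ k)) hM0
  set lam : Fin (d+1) → ℝ := fun k => (v k : ℝ) - q * zR k + M0 * ((oneσ k : ℤ) : ℝ) with hlam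
  have honej0 : oneσ j0 = 0 := by simp [honeσ, hj0σ]
  have hlamj0 : lam j0 = 0 := by
    rw [hlam]
    simp only [honej0]
    rw [hq]
    field_simp
    simp
  have hlamnn : ∀ k, 0 ≤ lam k := by
    intro k
    by_cases hk : k = j0
    · rw [hk, hlamj0]
    · have h1 : oneσ k = 1 := by simp [honeσ, hmem k hk]
      rw [hlam]
      simp only [h1]
      have := hM0k k
      push_cast
      linarith
  set b : Fin d → ℤ := fun i => w i + M0 * (A.mulVec oneσ) i with hb
  have hMlam : M.mulVec lam = fun i => (b i : ℝ) := by
    have hdecomp : lam = (fun k => (v k : ℝ)) + ((-q) • zR)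
        + ((M0 : ℝ) • (fun k => ((oneσ k : ℤ) : ℝ))) := by
      funext k
      simp [hlam]
      ring
    rw [hdecomp, Matrix.mulVec_add, Matrix.mulVec_add, Matrix.mulVec_smul, Matrix.mulVec_smul,
      hMdef, cast_mulVec A v, cast_mulVec A oneσ, hv]
    rw [← hMdef, hMz]
    funext i
    simp [hb]
  obtain ⟨x, hxb, hopt⟩ := hL b ⟨lam, hlamnn, by rw [sum_smul_col]; exact hMlam.symm⟩
  have hfeas : ∀ i, ∑ j, (A i j : ℝ) * lam j = (b i : ℝ) := by
    intro i
    have := congrFun hMlam i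
    simpa [Matrix.mulVec, dotProduct, hMdef, Matrix.map] using this
  have hcx : (∑ j, (c j : ℝ) * (x j : ℝ)) ≤ ∑ j, (c j : ℝ) * lam j := hopt lam hlamnn hfeas
  have hMx : M.mulVec (fun j => ((x j : ℤ) : ℝ)) = fun i => (b i : ℝ) := by
    rw [hMdef, cast_mulVec A (fun j => (x j : ℤ)), hxb]
  have hdiff : M.mulVec ((fun j => ((x j : ℤ) : ℝ)) - lam) = 0 := by
    rw [Matrix.mulVec_sub, hMx, hMlam]
    simp
  obtain ⟨t, ht⟩ := hkspan _ hdiff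
  have hxj : ∀ j, ((x j : ℤ) : ℝ) = lam j + t * zR j := by
    intro j
    have := congrFun ht j
    simp only [Pi.sub_apply, Pi.smul_apply, smul_eq_mul] at this
    rw [hzR] at this ⊢
    linarith
  have hcastx : ∀ j, ((x j : ℤ) : ℝ) = (x j : ℝ) := fun j => by push_cast; ring
  have htle : t * (∑ j, (c j : ℝ) * zR j) ≤ 0 := by
    have h4 : ∑ j, (c j : ℝ) * (x j : ℝ) = (∑ j, (c j : ℝ) * lam j)
        + t * ∑ j, (c j : ℝ) * zR j := by
      rw [← cost_shift]
      exact Finset.sum_congr rfl fun j _ => by rw [← hcastx j, hxj j]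
    linarith
  have htge : 0 ≤ t * zR j0 := by
    have h5 := hxj j0
    rw [hlamj0, zero_add] at h5
    have h6 : (0:ℝ) ≤ ((x j0 : ℤ) : ℝ) := by positivity
    linarith
  have ht0 : t = 0 := by nlinarith
  have hxlam : ∀ j, ((x j : ℤ) : ℝ) = lam j := by
    intro j; rw [hxj j, ht0]; ring
  have hxj0 : (x j0 : ℤ) = 0 := by
    have := hxlam j0
    rw [hlamj0] at this
    exact_mod_cast this
  refine ⟨(fun k => (x k : ℤ)) - (M0 : ℤ) • oneσ, ?_, ?_⟩
  · intro k hk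
    have hkj0 : k = j0 := by
      by_contra h
      exact hk (hmem k h)
    rw [hkj0]
    simp [honej0, hxj0]
  · rw [Matrix.mulVec_sub, Matrix.mulVec_smul, hxb, hb]
    funext i
    simp

lemma dir_mpr (d : ℕ) (A : Matrix (Fin d) (Fin (d+1)) ℤ) (c : Fin (d+1) → ℤ)
    (z : Fin (d+1) → ℤ) (hz : A.mulVec z = 0) (hS : 0 < ∑ j, c j * z j)
    (hkspan : ∀ v : Fin (d+1) → ℝ,
      (A.map (Int.cast : ℤ → ℝ)).mulVec v = 0 → ∃ t : ℝ, v = t • (fun j => ((z j : ℤ) : ℝ)))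
    (hsurj : LinearMap.range (A.map (Int.cast : ℤ → ℝ)).mulVecLin = ⊤)
    (hP : ∃ j, 0 < z j)
    (hR : ∀ σ : Finset (Fin (d+1)), IsDeltaFace A c σ → σ.card = d →
      ∀ w : Fin d → ℤ, ∃ zz : Fin (d+1) → ℤ, (∀ j ∉ σ, zz j = 0) ∧ A.mulVec zz = w) :
    ∀ b : Fin d → ℤ,
      (∃ lam : Fin (d+1) → ℝ, (∀ j, 0 ≤ lam j) ∧
        (fun i => (b i : ℝ)) = ∑ j, lam j • colA A j) →
      ∃ x : Fin (d+1) → ℕ, A.mulVec (fun i => (x i : ℤ)) = b ∧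
        ∀ y : Fin (d+1) → ℝ, (∀ j, 0 ≤ y j) →
          (∀ i, ∑ j, (A i j : ℝ) * y j = (b i : ℝ)) →
          (∑ j, (c j : ℝ) * (x j : ℝ)) ≤ ∑ j, (c j : ℝ) * y j := by
  classical
  set zR : Fin (d+1) → ℝ := fun j => ((z j : ℤ) : ℝ) with hzR
  set M := A.map (Int.cast : ℤ → ℝ) with hMdef
  have hMz : M.mulVec zR = 0 := by
    rw [hMdef, hzR, cast_mulVec A z, hz]
    funext i; simp
  have hSR : (0:ℝ) < ∑ j, (c j : ℝ) * zR j := by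
    have h0 : ((∑ j, c j * z j : ℤ) : ℝ) = ∑ j, (c j : ℝ) * zR j := by push_cast [hzR]; rfl
    rw [← h0]
    exact_mod_cast hS
  intro b ⟨lam, hlam0, hlamb⟩
  have hMlam : M.mulVec lam = fun i => (b i : ℝ) := by
    rw [← sum_smul_col, ← hlamb]
  set P' : Finset (Fin (d+1)) := Finset.univ.filter (fun k => 0 < z k) with hP'
  have hne : P'.Nonempty := by
    obtain ⟨j, hj⟩ := hP
    exact ⟨j, by simp [hP', hj]⟩
  obtain ⟨j0, hj0P, hsup⟩ := Finset.exists_mem_eq_sup' hne (fun k => -(lam k) / ((z k : ℤ) : ℝ))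
  have hzj0 : 0 < z j0 := by
    have := Finset.mem_filter.mp hj0P
    exact this.2
  have hzRj0 : 0 < zR j0 := by
    have h7 : (0:ℝ) < ((z j0 : ℤ) : ℝ) := by exact_mod_cast hzj0
    exact h7
  have hzRj0ne : zR j0 ≠ 0 := ne_of_gt hzRj0
  set tstar : ℝ := -(lam j0) / zR j0 with htstar
  have hmax : ∀ k, 0 < z k → -(lam k) / zR k ≤ tstar := by
    intro k hk
    have hkP : k ∈ P' := by simp [hP', hk]
    have h8 := Finset.le_sup' (fun k => -(lam k) / ((z k : ℤ) : ℝ)) hkP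
    rw [hsup] at h8
    exact h8
  have htle0 : tstar ≤ 0 := by
    rw [htstar]
    apply div_nonpos_of_nonpos_of_nonneg
    · linarith [hlam0 j0]
    · linarith
  set lamstar : Fin (d+1) → ℝ := fun k => lam k + tstar * zR k with hlamstar
  have hlsj0 : lamstar j0 = 0 := by
    rw [hlamstar]
    simp only [htstar]
    field_simp
    simp
  have hlsnn : ∀ k, 0 ≤ lamstar k := by
    intro k
    rw [hlamstar]
    simp only []
    rcases lt_trichotomy (z k) 0 with h | h | h
    · have hzk : zR k < 0 := by
        have h7 : ((z k : ℤ) : ℝ) < 0 := by exact_mod_cast h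
        exact h7
      nlinarith [hlam0 k]
    · have hzk : zR k = 0 := by
        have h7 : ((z k : ℤ) : ℝ) = 0 := by exact_mod_cast h
        exact h7
      rw [hzk]
      simpa using hlam0 k
    · have hzk : (0:ℝ) < zR k := by
        have h7 : (0:ℝ) < ((z k : ℤ) : ℝ) := by exact_mod_cast h
        exact h7
      have := hmax k h
      rw [div_le_iff₀ hzk] at this
      linarith
  have hMls : M.mulVec lamstar = fun i => (b i : ℝ) := by
    have hdecomp : lamstar = lam + tstar • zR := by
      funext k
      simp [hlamstar]
    rw [hdecomp, Matrix.mulVec_add, Matrix.mulVec_smul, hMz, hMlam]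
    funext i; simp
  obtain ⟨y, hy⟩ := exists_dual M hsurj zR hMz j0 hzRj0ne (fun k => (c k : ℝ))
  have hycol : ∀ k, k ≠ j0 → y ⬝ᵥ colA A k = (c k : ℝ) := by
    intro k hk
    have := hy k hk
    convert this using 2
    rfl
  set σ : Finset (Fin (d+1)) := {j0}ᶜ with hσ
  have hj0σ : j0 ∉ σ := by simp [hσ]
  have hmemσ : ∀ k, k ≠ j0 → k ∈ σ := by
    intro k hk
    simp [hσ, hk]
  have hcard : σ.card = d := by
    rw [hσ, Finset.card_compl]
    simp
  have hface : IsDeltaFace A c σ := by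
    refine ⟨y, fun k hk => hycol k (by intro h; rw [h] at hk; exact hj0σ hk), ?_⟩
    intro k hk
    have hkj0 : k = j0 := by
      by_contra h
      exact hk (hmemσ k h)
    rw [hkj0]
    -- strict inequality at j0
    have hdp := dual_pair A y zR hMz
    have h3 : ∑ j, zR j * ((c j : ℝ) - y ⬝ᵥ colA A j) = ∑ j, (c j : ℝ) * zR j := by
      simp only [mul_sub]
      rw [Finset.sum_sub_distrib, hdp, sub_zero]
      exact Finset.sum_congr rfl fun j _ => mul_comm _ _
    have hkey : zR j0 * ((c j0 : ℝ) - y ⬝ᵥ colA A j0) = ∑ j, (c j : ℝ) * zR j := by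
      rw [← h3, Finset.sum_eq_single j0]
      · intro k' _ hk'
        rw [hycol k' hk']
        ring
      · intro h; exact absurd (Finset.mem_univ j0) h
    have h1 : 0 < zR j0 * ((c j0 : ℝ) - y ⬝ᵥ colA A j0) := by rw [hkey]; exact hSR
    nlinarith
  obtain ⟨zz, hzz0, hzzb⟩ := hR σ hface hcard b
  have hzzj0 : zz j0 = 0 := hzz0 j0 hj0σ
  have hMzz : M.mulVec (fun j => ((zz j : ℤ) : ℝ)) = fun i => (b i : ℝ) := by
    rw [hMdef, cast_mulVec A zz, hzzb]
  have hdiff : M.mulVec ((fun j => ((zz j : ℤ) : ℝ)) - lamstar) = 0 := by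
    rw [Matrix.mulVec_sub, hMzz, hMls]
    simp
  obtain ⟨t, ht⟩ := hkspan _ hdiff
  have ht0 : t = 0 := by
    have := congrFun ht j0
    simp only [Pi.sub_apply, Pi.smul_apply, smul_eq_mul] at this
    rw [hzzj0, hlsj0] at this
    simp at this
    rcases this with h | h
    · exact h
    · rw [hzR] at hzRj0ne
      exact absurd h hzRj0ne
  have hzzls : ∀ j, ((zz j : ℤ) : ℝ) = lamstar j := by
    intro j
    have := congrFun ht j
    rw [ht0] at this
    simp only [Pi.sub_apply, Pi.smul_apply, smul_eq_mul, zero_mul] at this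
    linarith
  have hzznn : ∀ j, 0 ≤ zz j := by
    intro j
    have : (0:ℝ) ≤ ((zz j : ℤ) : ℝ) := by rw [hzzls j]; exact hlsnn j
    exact_mod_cast this
  refine ⟨fun k => (zz k).toNat, ?_, ?_⟩
  · have : (fun i => (((zz i).toNat : ℕ) : ℤ)) = zz := by
      funext i; exact Int.toNat_of_nonneg (hzznn i)
    rw [this, hzzb]
  · intro y' hy'0 hy'f
    have hMy' : M.mulVec y' = fun i => (b i : ℝ) := by
      funext i
      simpa [Matrix.mulVec, dotProduct, hMdef, Matrix.map] using hy'f i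
    have hdiff' : M.mulVec (y' - lamstar) = 0 := by
      rw [Matrix.mulVec_sub, hMy', hMls]
      simp
    obtain ⟨s, hs⟩ := hkspan _ hdiff'
    have hy'j : ∀ j, y' j = lamstar j + s * zR j := by
      intro j
      have := congrFun hs j
      simp only [Pi.sub_apply, Pi.smul_apply, smul_eq_mul] at this
      rw [hzR] at this ⊢
      linarith
    have hsge : 0 ≤ s := by
      have h5 := hy'j j0
      rw [hlsj0, zero_add] at h5
      have h6 := hy'0 j0
      rw [h5] at h6
      rw [mul_comm] at h6
      exact nonneg_of_mul_nonneg_right h6 hzRj0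
    have hcost : ∑ j, (c j : ℝ) * y' j
        = (∑ j, (c j : ℝ) * lamstar j) + s * ∑ j, (c j : ℝ) * zR j := by
      rw [← cost_shift]
      exact Finset.sum_congr rfl fun j _ => by rw [hy'j j]
    have hxls : ∀ j, (((zz j).toNat : ℕ) : ℝ) = lamstar j := by
      intro j
      rw [← hzzls j]
      norm_cast
      exact Int.toNat_of_nonneg (hzznn j)
    have hxcost : ∑ j, (c j : ℝ) * (((zz j).toNat : ℕ) : ℝ) = ∑ j, (c j : ℝ) * lamstar j :=
      Finset.sum_congr rfl fun j _ => by rw [hxls j]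
    rw [hxcost, hcost]
    nlinarith


/-- For `A` with `ℤA = ℤᵈ` and `c` generic, the system `yA ≤ c` is totally dual integral
(every linear program `min {c·x : Ax = b, x ≥ 0}` with `b ∈ cone(A) ∩ ℤᵈ` has an integral
optimal solution) if and only if the regular triangulation `Δ_c` is unimodular
(`ℤA_σ = ℤᵈ` for every maximal face `σ` of `Δ_c`). -/
theorem stmt_18 (d n : ℕ) (A : Matrix (Fin d) (Fin n) ℤ) (c : Fin n → ℤ)
    (hrank : A.rank = d)
    (hker : ∀ v : Fin n → ℝ,
      (A.map (Int.cast : ℤ → ℝ)).mulVec v = 0 → (∀ i, 0 ≤ v i) → v = 0)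
    (hgen : ∀ x y : Fin n → ℕ,
      A.mulVec (fun i => (x i : ℤ)) = A.mulVec (fun i => (y i : ℤ)) →
      (∑ i, c i * (x i : ℤ)) = (∑ i, c i * (y i : ℤ)) → x = y)
    (hZA : ∀ w : Fin d → ℤ, ∃ v : Fin n → ℤ, A.mulVec v = w) :
    (∀ b : Fin d → ℤ,
      (∃ lam : Fin n → ℝ, (∀ j, 0 ≤ lam j) ∧
        (fun i => (b i : ℝ)) = ∑ j, lam j • colA A j) →
      ∃ x : Fin n → ℕ, A.mulVec (fun i => (x i : ℤ)) = b ∧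
        ∀ y : Fin n → ℝ, (∀ j, 0 ≤ y j) →
          (∀ i, ∑ j, (A i j : ℝ) * y j = (b i : ℝ)) →
          (∑ j, (c j : ℝ) * (x j : ℝ)) ≤ ∑ j, (c j : ℝ) * y j) ↔
    (∀ σ : Finset (Fin n), IsDeltaFace A c σ → σ.card = d →
      ∀ w : Fin d → ℤ, ∃ z : Fin n → ℤ, (∀ j ∉ σ, z j = 0) ∧ A.mulVec z = w) := by
  classical
  have hik : ∀ z : Fin n → ℤ, A.mulVec z = 0 → ∑ j, c j * z j = 0 → z = 0 :=
    intKer A c hgen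
  have hnd1 : n ≤ d + 1 := n_le_d1 A c hik
  have hsurj := surj_of_hZA A hZA
  have hdn : d ≤ n := by
    have h1 := (A.map (Int.cast : ℤ → ℝ)).mulVecLin.finrank_range_le
    rw [hsurj] at h1
    rw [finrank_top] at h1
    simpa [Module.finrank_fin_fun] using h1
  rcases (by omega : n = d ∨ n = d + 1) with h | h
  · subst h
    constructor
    · intro _ σ hface hcard w
      exact square_rhs n A c hZA σ hcard w
    · intro _
      exact square_lhs n A c hsurj hZA
  · subst h
    obtain ⟨z0, hz0ne, hz0k⟩ := exists_circuit A (by omega)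
    have hcz0 : ∑ j, c j * z0 j ≠ 0 := fun hc => hz0ne (hik z0 hz0k hc)
    obtain ⟨z, hzk, hS⟩ : ∃ z : Fin (d+1) → ℤ, A.mulVec z = 0 ∧ 0 < ∑ j, c j * z j := by
      rcases lt_or_gt_of_ne hcz0 with h' | h'
      · refine ⟨-z0, ?_, ?_⟩
        · rw [Matrix.mulVec_neg, hz0k]; simp
        · have he : ∑ j, c j * (-z0) j = -∑ j, c j * z0 j := by
            rw [← Finset.sum_neg_distrib]
            exact Finset.sum_congr rfl fun j _ => by simp
          rw [he]
          linarith
      · exact ⟨z0, hz0k, h'⟩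
    set zR : Fin (d+1) → ℝ := fun j => ((z j : ℤ) : ℝ) with hzR
    have hMz : (A.map (Int.cast : ℤ → ℝ)).mulVec zR = 0 := by
      rw [hzR, cast_mulVec A z, hzk]
      funext i; simp
    have hzne : z ≠ 0 := by
      intro h0
      rw [h0] at hS
      simp at hS
    have hzRne : zR ≠ 0 := by
      intro h0
      apply hzne
      funext j
      have := congrFun h0 j
      simp only [hzR, Pi.zero_apply] at this ⊢
      exact_mod_cast this
    have hkspan := ker_span (A.map (Int.cast : ℤ → ℝ)) hsurj zR hzRne hMz
    have hP : ∃ j, 0 < z j := by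
      by_contra h0
      push_neg at h0
      have hnn : ∀ i, 0 ≤ (-zR) i := by
        intro i
        simp only [Pi.neg_apply, hzR]
        have : ((z i : ℤ) : ℝ) ≤ 0 := by exact_mod_cast h0 i
        linarith
      have hm : (A.map (Int.cast : ℤ → ℝ)).mulVec (-zR) = 0 := by
        rw [Matrix.mulVec_neg, hMz]
        simp
      have := hker (-zR) hm hnn
      apply hzRne
      funext j
      have := congrFun this j
      simp only [Pi.neg_apply, Pi.zero_apply] at this
      simp only [Pi.zero_apply]
      linarith
    constructor
    · intro hL
      exact dir_mp d A c z hzk hS hkspan hZA hL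
    · intro hR
      exact dir_mpr d A c z hzk hS hkspan hsurj hP hR
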